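/- arXiv:nlin/0309020 — 6 statements merged into one kernel-verified Lean document; each statement's English description precedes it below -/
import Mathlib

section
/- Let ε > 0, L > 0, and let λ satisfy ε/2 < λ < ε and e^{2λL}·(2λ − ε) = ε. Then there exists a linear bound state ψ (for parameters ε, L, λ) that is not identically zero, is even (ψ(−x) = ψ(x) for all x), and is strictly positive. -/
/-!
Take `ψ x = cosh (λ x)` between the wells and continue it by the decaying exponential
`cosh (λ L) e^{-λ (|x| - L)}` outside. On each of the three intervals `ψ` solves `ψ'' = λ² ψ`, it is
even, positive, continuous and decays at `±∞`. Its derivative jumps at `L` by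
`-λ (cosh (λ L) + sinh (λ L)) = -λ e^{λ L}`, and at `-L` by the same amount, and
`λ e^{λ L} = ε cosh (λ L)` is a rewriting of `e^{2 λ L} (2 λ - ε) = ε`.
-/

open Filter Topology Set

/-- A linear bound state for the double delta-well problem with parameters
`ε, L, lam`: `ψ` is continuous, decays at `±∞`, has derivative `ψ'` and satisfies
`ψ'' = lam² ψ` away from `±L`, and the one-sided limits of `ψ'` at `±L` exist and
jump by `-ε ψ`. -/
def IsLinearBoundState (ε L lam : ℝ) (ψ ψ' : ℝ → ℝ) : Prop :=
  Continuous ψ ∧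
  Tendsto ψ atTop (𝓝 0) ∧ Tendsto ψ atBot (𝓝 0) ∧
  (∀ x : ℝ, x ≠ L → x ≠ -L →
    HasDerivAt ψ (ψ' x) x ∧ HasDerivAt ψ' (lam ^ 2 * ψ x) x) ∧
  (∀ x : ℝ, x = L ∨ x = -L →
    ∃ a b : ℝ,
      Tendsto ψ' (𝓝[>] x) (𝓝 a) ∧
      Tendsto ψ' (𝓝[<] x) (𝓝 b) ∧
      a - b = -ε * ψ x)

open Real

def IsFreeSolution (lam : ℝ) (g g' : ℝ → ℝ) : Prop :=
  ∀ x, HasDerivAt g (g' x) x ∧ HasDerivAt g' (lam ^ 2 * g x) x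

namespace IsFreeSolution

variable {lam : ℝ} {g g' ψ : ℝ → ℝ} {U : Set ℝ}

theorem cosh_mul (lam : ℝ) :
    IsFreeSolution lam (fun x => cosh (lam * x)) (fun x => lam * sinh (lam * x)) := by
  intro x
  constructor
  · simpa [mul_comm] using ((hasDerivAt_id x).const_mul lam).cosh
  · refine ((((hasDerivAt_id x).const_mul lam).sinh).const_mul lam).congr_deriv ?_
    simp only [id_eq, mul_one]
    ring

theorem const_mul_exp {μ : ℝ} (hμ : μ ^ 2 = lam ^ 2) (c a : ℝ) :
    IsFreeSolution lam (fun x => c * exp (μ * (x - a))) (fun x => μ * c * exp (μ * (x - a))) := by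
  intro x
  have hexp : HasDerivAt (fun x => exp (μ * (x - a))) (μ * exp (μ * (x - a))) x := by
    simpa [mul_comm] using (((hasDerivAt_id x).sub_const a).const_mul μ).exp
  constructor
  · exact (hexp.const_mul c).congr_deriv (by ring)
  · exact (hexp.const_mul (μ * c)).congr_deriv (by rw [← hμ]; ring)

theorem deriv_eqOn (hg : IsFreeSolution lam g g') (hU : IsOpen U) (hψ : EqOn ψ g U) :
    EqOn (deriv ψ) g' U := fun y hy =>
  ((hg y).1.congr_of_eventuallyEq (eventuallyEq_of_mem (hU.mem_nhds hy) hψ)).deriv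

theorem hasDerivAt_of_eqOn (hg : IsFreeSolution lam g g') (hU : IsOpen U) (hψ : EqOn ψ g U)
    {x : ℝ} (hx : x ∈ U) :
    HasDerivAt ψ (deriv ψ x) x ∧ HasDerivAt (deriv ψ) (lam ^ 2 * ψ x) x := by
  have hψ' := hg.deriv_eqOn hU hψ
  constructor
  · rw [hψ' hx]
    exact (hg x).1.congr_of_eventuallyEq (eventuallyEq_of_mem (hU.mem_nhds hx) hψ)
  · rw [hψ hx]
    exact (hg x).2.congr_of_eventuallyEq (eventuallyEq_of_mem (hU.mem_nhds hx) hψ')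

theorem tendsto_deriv_of_eqOn (hg : IsFreeSolution lam g g') (hU : IsOpen U) (hψ : EqOn ψ g U)
    {s : Set ℝ} {a : ℝ} (hUa : U ∈ 𝓝[s] a) : Tendsto (deriv ψ) (𝓝[s] a) (𝓝 (g' a)) :=
  ((hg a).2.continuousAt.tendsto.mono_left nhdsWithin_le_nhds).congr'
    (eventuallyEq_of_mem hUa (hg.deriv_eqOn hU hψ).symm)

end IsFreeSolution

theorem isLinearBoundState_deriv_of_eqOn {ε L lam : ℝ} {ψ gl gl' gm gm' gr gr' : ℝ → ℝ}
    (hL : 0 < L) (hψ : Continuous ψ) (htop : Tendsto ψ atTop (𝓝 0))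
    (hbot : Tendsto ψ atBot (𝓝 0))
    (hl : IsFreeSolution lam gl gl') (hm : IsFreeSolution lam gm gm')
    (hr : IsFreeSolution lam gr gr')
    (hψl : EqOn ψ gl (Iio (-L))) (hψm : EqOn ψ gm (Ioo (-L) L)) (hψr : EqOn ψ gr (Ioi L))
    (hjumpL : gm' (-L) - gl' (-L) = -ε * ψ (-L)) (hjumpR : gr' L - gm' L = -ε * ψ L) :
    IsLinearBoundState ε L lam ψ (deriv ψ) := by
  refine ⟨hψ, htop, hbot, fun x hxL hxL' => ?_, ?_⟩
  · rcases hxL'.lt_or_gt with hx | hx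
    · exact hl.hasDerivAt_of_eqOn isOpen_Iio hψl hx
    rcases hxL.lt_or_gt with hx' | hx'
    · exact hm.hasDerivAt_of_eqOn isOpen_Ioo hψm ⟨hx, hx'⟩
    · exact hr.hasDerivAt_of_eqOn isOpen_Ioi hψr hx'
  · rintro x (rfl | rfl)
    · exact ⟨gr' x, gm' x, hr.tendsto_deriv_of_eqOn isOpen_Ioi hψr self_mem_nhdsWithin,
        hm.tendsto_deriv_of_eqOn isOpen_Ioo hψm (Ioo_mem_nhdsLT (by linarith)), hjumpR⟩
    · exact ⟨gm' (-L), gl' (-L),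
        hm.tendsto_deriv_of_eqOn isOpen_Ioo hψm (Ioo_mem_nhdsGT (by linarith)),
        hl.tendsto_deriv_of_eqOn isOpen_Iio hψl self_mem_nhdsWithin, hjumpL⟩

noncomputable def evenBoundState (lam L x : ℝ) : ℝ :=
  cosh (lam * min |x| L) * exp (-lam * max (|x| - L) 0)

section evenBoundState

variable {lam L : ℝ}

theorem evenBoundState_neg (lam L x : ℝ) : evenBoundState lam L (-x) = evenBoundState lam L x := by
  simp only [evenBoundState, abs_neg]

theorem evenBoundState_pos (lam L x : ℝ) : 0 < evenBoundState lam L x := by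
  unfold evenBoundState
  positivity

theorem continuous_evenBoundState (lam L : ℝ) : Continuous (evenBoundState lam L) := by
  unfold evenBoundState
  fun_prop

theorem evenBoundState_eqOn_Icc :
    EqOn (evenBoundState lam L) (fun x => cosh (lam * x)) (Icc (-L) L) := by
  intro x hx
  have hxL : |x| ≤ L := abs_le.mpr hx
  rw [evenBoundState, min_eq_left hxL, max_eq_right (by linarith), mul_zero, exp_zero, mul_one]
  rcases abs_choice x with h | h <;> simp [h]

theorem evenBoundState_eqOn_Ici (hL : 0 ≤ L) :
    EqOn (evenBoundState lam L) (fun x => cosh (lam * L) * exp (-lam * (x - L))) (Ici L) := by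
  intro x hx
  have hx : L ≤ x := hx
  rw [evenBoundState, abs_of_nonneg (by linarith), min_eq_right hx, max_eq_left (by linarith)]

theorem evenBoundState_eqOn_Iic (hL : 0 ≤ L) :
    EqOn (evenBoundState lam L) (fun x => cosh (lam * L) * exp (lam * (x - -L))) (Iic (-L)) := by
  intro x hx
  have hx : -x ∈ Ici L := le_neg_of_le_neg hx.out
  rw [← evenBoundState_neg, evenBoundState_eqOn_Ici hL hx]
  ring_nf

theorem tendsto_evenBoundState_atTop (hL : 0 ≤ L) (hlam : 0 < lam) :
    Tendsto (evenBoundState lam L) atTop (𝓝 0) := by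
  have hdecay : Tendsto (fun x => cosh (lam * L) * exp (-lam * (x - L))) atTop (𝓝 0) := by
    have := (tendsto_id.atTop_add (tendsto_const_nhds (x := -L))).const_mul_atTop hlam
    simpa [← sub_eq_add_neg] using
      (tendsto_exp_neg_atTop_nhds_zero.comp this).const_mul (cosh (lam * L))
  exact hdecay.congr' (eventuallyEq_of_mem (Ici_mem_atTop L) (evenBoundState_eqOn_Ici hL).symm)

theorem tendsto_evenBoundState_atBot (hL : 0 ≤ L) (hlam : 0 < lam) :
    Tendsto (evenBoundState lam L) atBot (𝓝 0) := by
  simpa [Function.comp_def, evenBoundState_neg] using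
    (tendsto_evenBoundState_atTop hL hlam).comp tendsto_neg_atBot_atTop

end evenBoundState

theorem mul_exp_eq_mul_cosh {ε L lam : ℝ} (h : exp (2 * lam * L) * (2 * lam - ε) = ε) :
    lam * exp (lam * L) = ε * cosh (lam * L) := by
  have hsq : exp (2 * lam * L) = exp (lam * L) ^ 2 := by
    rw [← exp_nat_mul]
    ring_nf
  rw [cosh_eq, exp_neg]
  field_simp
  linear_combination h - hsq * (2 * lam - ε)

theorem isLinearBoundState_evenBoundState {ε L lam : ℝ} (hL : 0 < L) (hlam : 0 < lam)
    (h : exp (2 * lam * L) * (2 * lam - ε) = ε) :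
    IsLinearBoundState ε L lam (evenBoundState lam L) (deriv (evenBoundState lam L)) := by
  have hψL : evenBoundState lam L L = cosh (lam * L) :=
    evenBoundState_eqOn_Icc ⟨by linarith, le_rfl⟩
  have hψL' : evenBoundState lam L (-L) = cosh (lam * L) := by
    rw [evenBoundState_neg, hψL]
  have hkey := mul_exp_eq_mul_cosh h
  rw [← cosh_add_sinh] at hkey
  refine isLinearBoundState_deriv_of_eqOn hL (continuous_evenBoundState lam L)
    (tendsto_evenBoundState_atTop hL.le hlam) (tendsto_evenBoundState_atBot hL.le hlam)
    (IsFreeSolution.const_mul_exp rfl _ _) (IsFreeSolution.cosh_mul lam)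
    (IsFreeSolution.const_mul_exp (neg_sq lam) _ _)
    ((evenBoundState_eqOn_Iic hL.le).mono Iio_subset_Iic_self)
    (evenBoundState_eqOn_Icc.mono Ioo_subset_Icc_self)
    ((evenBoundState_eqOn_Ici hL.le).mono Ioi_subset_Ici_self) ?_ ?_
  · simp only [hψL', sub_neg_eq_add, neg_add_cancel, mul_zero, exp_zero, mul_one, mul_neg,
      sinh_neg]
    linarith
  · simp only [hψL, sub_self, mul_zero, exp_zero, mul_one]
    linarith

theorem exists_symmetric_linear_bound_state_general (ε L lam : ℝ)
    (hε : 0 < ε) (hL : 0 < L)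
    (h1 : ε / 2 < lam)
    (h3 : Real.exp (2 * lam * L) * (2 * lam - ε) = ε) :
    ∃ ψ ψ' : ℝ → ℝ, IsLinearBoundState ε L lam ψ ψ' ∧
      ψ ≠ 0 ∧ (∀ x : ℝ, ψ (-x) = ψ x) ∧ (∀ x : ℝ, 0 < ψ x) := by
  have hlam : 0 < lam := by linarith
  refine ⟨evenBoundState lam L, deriv (evenBoundState lam L),
    isLinearBoundState_evenBoundState hL hlam h3, fun h => ?_, evenBoundState_neg lam L,
    evenBoundState_pos lam L⟩
  exact (evenBoundState_pos lam L 0).ne' (congrFun h 0)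

/-- if `ε/2 < lam < ε` and `e^{2 lam L} (2 lam - ε) = ε`, there exists a
nonzero, even, strictly positive linear bound state. -/
theorem exists_symmetric_linear_bound_state (ε L lam : ℝ)
    (hε : 0 < ε) (hL : 0 < L)
    (h1 : ε / 2 < lam) (h2 : lam < ε)
    (h3 : Real.exp (2 * lam * L) * (2 * lam - ε) = ε) :
    ∃ ψ ψ' : ℝ → ℝ, IsLinearBoundState ε L lam ψ ψ' ∧
      ψ ≠ 0 ∧ (∀ x : ℝ, ψ (-x) = ψ x) ∧ (∀ x : ℝ, 0 < ψ x) :=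
  exists_symmetric_linear_bound_state_general ε L lam hε hL h1 h3
end

section
/- Let ε > 0, L > 0, and let λ satisfy 0 < λ < ε/2 and e^{2λL}·(ε − 2λ) = ε. Then there exists a linear bound state ψ (for parameters ε, L, λ) that is not identically zero and is odd (ψ(−x) = −ψ(x) for all x). -/
/-!
The odd state is `sinh (λ x)` between the wells, continued outside by the decaying exponentials
`± sinh (λ L) e^{-λ (|x| - L)}` that match it at `±L`. Away from `±L` both pieces solve
`ψ'' = λ² ψ`, and at `x = L` the derivative jumps by
`-λ (sinh (λ L) + cosh (λ L)) = -λ e^{λ L}`. The condition `e^{2λL} (ε - 2λ) = ε` is exactly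
`λ e^{λ L} = ε sinh (λ L)`, i.e. the jump equals `-ε ψ(L)`, and symmetrically at `-L`.
-/

open Filter Topology Set

open Real

noncomputable def piecewiseIcc (a b : ℝ) (f g h : ℝ → ℝ) (x : ℝ) : ℝ :=
  if a ≤ x then (if x ≤ b then g x else h x) else f x

section PiecewiseIcc

variable {a b x : ℝ} {f g h : ℝ → ℝ}

lemma piecewiseIcc_of_lt (hx : x < a) : piecewiseIcc a b f g h x = f x := by
  simp [piecewiseIcc, not_le.mpr hx]

lemma piecewiseIcc_of_mem_Icc (hx : x ∈ Icc a b) : piecewiseIcc a b f g h x = g x := by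
  simp [piecewiseIcc, hx.1, hx.2]

lemma piecewiseIcc_of_gt (hab : a ≤ b) (hx : b < x) : piecewiseIcc a b f g h x = h x := by
  simp [piecewiseIcc, hab.trans hx.le, not_le.mpr hx]

lemma const_mul_piecewiseIcc (c : ℝ) : c * piecewiseIcc a b f g h x =
    piecewiseIcc a b (fun y => c * f y) (fun y => c * g y) (fun y => c * h y) x := by
  unfold piecewiseIcc
  split_ifs <;> rfl

lemma piecewiseIcc_neg (hb : 0 ≤ b) (hfh : ∀ x, h (-x) = -f x) (hg : ∀ x, g (-x) = -g x)
    (x : ℝ) : piecewiseIcc (-b) b f g h (-x) = -piecewiseIcc (-b) b f g h x := by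
  have hbb : -b ≤ b := by linarith
  rcases lt_or_ge x (-b) with hx | hx
  · rw [piecewiseIcc_of_lt hx, piecewiseIcc_of_gt hbb (by linarith), hfh]
  rcases le_or_gt x b with hx' | hx'
  · rw [piecewiseIcc_of_mem_Icc ⟨hx, hx'⟩, piecewiseIcc_of_mem_Icc ⟨by linarith, by linarith⟩,
      hg]
  · rw [piecewiseIcc_of_gt hbb hx', piecewiseIcc_of_lt (by linarith), ← neg_neg x, hfh,
      neg_neg, neg_neg]

lemma continuous_piecewiseIcc (hab : a ≤ b) (hf : Continuous f) (hg : Continuous g)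
    (hh : Continuous h) (hfa : f a = g a) (hgb : g b = h b) :
    Continuous (piecewiseIcc a b f g h) := by
  refine (hg.if_le hh continuous_id continuous_const ?_).if_le hf continuous_const
    continuous_id ?_
  · rintro x rfl
    exact hgb
  · rintro x rfl
    simp [hab, hfa]

lemma piecewiseIcc_eventuallyEq_atBot : piecewiseIcc a b f g h =ᶠ[atBot] f :=
  (eventually_lt_atBot a).mono fun _ => piecewiseIcc_of_lt

lemma piecewiseIcc_eventuallyEq_atTop (hab : a ≤ b) : piecewiseIcc a b f g h =ᶠ[atTop] h :=
  (eventually_gt_atTop b).mono fun _ => piecewiseIcc_of_gt hab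

lemma hasDerivAt_piecewiseIcc {f' g' h' : ℝ → ℝ} (hab : a ≤ b)
    (hf : ∀ x, HasDerivAt f (f' x) x) (hg : ∀ x, HasDerivAt g (g' x) x)
    (hh : ∀ x, HasDerivAt h (h' x) x) (hxa : x ≠ a) (hxb : x ≠ b) :
    HasDerivAt (piecewiseIcc a b f g h) (piecewiseIcc a b f' g' h' x) x := by
  rcases hxa.lt_or_gt with hxa | hax
  · rw [piecewiseIcc_of_lt hxa]
    exact (hf x).congr_of_eventuallyEq <|
      (eventually_lt_nhds hxa).mono fun _ => piecewiseIcc_of_lt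
  rcases hxb.lt_or_gt with hxb | hbx
  · rw [piecewiseIcc_of_mem_Icc ⟨hax.le, hxb.le⟩]
    exact (hg x).congr_of_eventuallyEq <| eventually_of_mem (Ioo_mem_nhds hax hxb)
      fun _ hy => piecewiseIcc_of_mem_Icc (Ioo_subset_Icc_self hy)
  · rw [piecewiseIcc_of_gt hab hbx]
    exact (hh x).congr_of_eventuallyEq <|
      (eventually_gt_nhds hbx).mono fun _ => piecewiseIcc_of_gt hab

lemma tendsto_piecewiseIcc_nhdsLT_left (hf : Continuous f) :
    Tendsto (piecewiseIcc a b f g h) (𝓝[<] a) (𝓝 (f a)) :=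
  (hf.continuousAt.tendsto.mono_left nhdsWithin_le_nhds).congr' <|
    eventually_nhdsWithin_of_forall fun _ hy => (piecewiseIcc_of_lt hy).symm

lemma tendsto_piecewiseIcc_nhdsGT_left (hab : a < b) (hg : Continuous g) :
    Tendsto (piecewiseIcc a b f g h) (𝓝[>] a) (𝓝 (g a)) :=
  (hg.continuousAt.tendsto.mono_left nhdsWithin_le_nhds).congr' <|
    eventually_of_mem (Ioo_mem_nhdsGT hab) fun _ hy =>
      (piecewiseIcc_of_mem_Icc (Ioo_subset_Icc_self hy)).symm

lemma tendsto_piecewiseIcc_nhdsLT_right (hab : a < b) (hg : Continuous g) :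
    Tendsto (piecewiseIcc a b f g h) (𝓝[<] b) (𝓝 (g b)) :=
  (hg.continuousAt.tendsto.mono_left nhdsWithin_le_nhds).congr' <|
    eventually_of_mem (Ioo_mem_nhdsLT hab) fun _ hy =>
      (piecewiseIcc_of_mem_Icc (Ioo_subset_Icc_self hy)).symm

lemma tendsto_piecewiseIcc_nhdsGT_right (hab : a ≤ b) (hh : Continuous h) :
    Tendsto (piecewiseIcc a b f g h) (𝓝[>] b) (𝓝 (h b)) :=
  (hh.continuousAt.tendsto.mono_left nhdsWithin_le_nhds).congr' <|
    eventually_nhdsWithin_of_forall fun _ hy => (piecewiseIcc_of_gt hab hy).symm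

end PiecewiseIcc

lemma hasDerivAt_mul_exp_mul_add (c k m x : ℝ) :
    HasDerivAt (fun y => c * exp (k * y + m)) (k * (c * exp (k * x + m))) x :=
  (((hasDerivAt_const_mul k).add_const m).exp.const_mul c).congr_deriv (by ring)

lemma hasDerivAt_sinh_mul (k x : ℝ) :
    HasDerivAt (fun y => sinh (k * y)) (k * cosh (k * x)) x :=
  (hasDerivAt_const_mul k).sinh.congr_deriv (by ring)

lemma hasDerivAt_cosh_mul (k x : ℝ) :
    HasDerivAt (fun y => cosh (k * y)) (k * sinh (k * x)) x :=
  (hasDerivAt_const_mul k).cosh.congr_deriv (by ring)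

lemma tendsto_mul_exp_nhds_zero {l : Filter ℝ} {u : ℝ → ℝ} (c : ℝ) (hu : Tendsto u l atBot) :
    Tendsto (fun x => c * exp (u x)) l (𝓝 0) := by
  simpa using (tendsto_exp_atBot.comp hu).const_mul c

lemma mul_exp_eq_mul_sinh_of_exp_mul_sub_eq {ε L lam : ℝ}
    (h : exp (2 * lam * L) * (ε - 2 * lam) = ε) :
    lam * exp (lam * L) = ε * sinh (lam * L) := by
  have hsq : exp (2 * lam * L) = exp (lam * L) ^ 2 := by
    rw [← exp_nat_mul]
    ring_nf
  rw [sinh_eq, exp_neg]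
  field_simp
  linear_combination (ε - 2 * lam) * hsq - h

section OddBoundState

variable {ε L lam x : ℝ}

noncomputable def oddBoundState (lam L : ℝ) : ℝ → ℝ :=
  piecewiseIcc (-L) L (fun x => -sinh (lam * L) * exp (lam * x + lam * L))
    (fun x => sinh (lam * x)) (fun x => sinh (lam * L) * exp (-lam * x + lam * L))

noncomputable def oddBoundStateDeriv (lam L : ℝ) : ℝ → ℝ :=
  piecewiseIcc (-L) L (fun x => lam * (-sinh (lam * L) * exp (lam * x + lam * L)))
    (fun x => lam * cosh (lam * x)) (fun x => -lam * (sinh (lam * L) * exp (-lam * x + lam * L)))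

lemma oddBoundState_neg (hL : 0 ≤ L) (x : ℝ) :
    oddBoundState lam L (-x) = -oddBoundState lam L x :=
  piecewiseIcc_neg hL (fun _ => by ring_nf) (fun _ => by rw [mul_neg, sinh_neg]) x

lemma continuous_oddBoundState (hL : 0 ≤ L) : Continuous (oddBoundState lam L) :=
  continuous_piecewiseIcc (by linarith) (by fun_prop) (by fun_prop) (by fun_prop)
    (by simp [mul_neg, sinh_neg]) (by simp)

lemma tendsto_oddBoundState_atTop (hlam : 0 < lam) (hL : 0 ≤ L) :
    Tendsto (oddBoundState lam L) atTop (𝓝 0) :=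
  (tendsto_mul_exp_nhds_zero _ <| tendsto_atBot_add_const_right _ _ <|
    tendsto_id.const_mul_atTop_of_neg (neg_neg_of_pos hlam)).congr'
    (piecewiseIcc_eventuallyEq_atTop (by linarith)).symm

lemma tendsto_oddBoundState_atBot (hlam : 0 < lam) :
    Tendsto (oddBoundState lam L) atBot (𝓝 0) :=
  (tendsto_mul_exp_nhds_zero _ <| tendsto_atBot_add_const_right _ _ <|
    tendsto_id.const_mul_atBot hlam).congr' piecewiseIcc_eventuallyEq_atBot.symm

lemma hasDerivAt_oddBoundState (hL : 0 ≤ L) (hxL : x ≠ L) (hxL' : x ≠ -L) :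
    HasDerivAt (oddBoundState lam L) (oddBoundStateDeriv lam L x) x :=
  hasDerivAt_piecewiseIcc (by linarith) (fun _ => hasDerivAt_mul_exp_mul_add _ _ _ _)
    (fun _ => hasDerivAt_sinh_mul _ _) (fun _ => hasDerivAt_mul_exp_mul_add _ _ _ _) hxL' hxL

lemma hasDerivAt_oddBoundStateDeriv (hL : 0 ≤ L) (hxL : x ≠ L) (hxL' : x ≠ -L) :
    HasDerivAt (oddBoundStateDeriv lam L) (lam ^ 2 * oddBoundState lam L x) x := by
  rw [oddBoundState, const_mul_piecewiseIcc]
  refine hasDerivAt_piecewiseIcc (by linarith) (fun y => ?_) (fun y => ?_) (fun y => ?_) hxL' hxL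
  · exact ((hasDerivAt_mul_exp_mul_add _ _ _ y).const_mul lam).congr_deriv (by ring)
  · exact ((hasDerivAt_cosh_mul lam y).const_mul lam).congr_deriv (by ring)
  · exact ((hasDerivAt_mul_exp_mul_add _ _ _ y).const_mul (-lam)).congr_deriv (by ring)

lemma oddBoundStateDeriv_jump (hL : 0 < L) (hres : lam * exp (lam * L) = ε * sinh (lam * L))
    (hx : x = L ∨ x = -L) :
    ∃ a b : ℝ, Tendsto (oddBoundStateDeriv lam L) (𝓝[>] x) (𝓝 a) ∧
      Tendsto (oddBoundStateDeriv lam L) (𝓝[<] x) (𝓝 b) ∧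
      a - b = -ε * oddBoundState lam L x := by
  have hLL : -L < L := by linarith
  rcases hx with rfl | rfl
  · refine ⟨_, _, tendsto_piecewiseIcc_nhdsGT_right hLL.le (by fun_prop),
      tendsto_piecewiseIcc_nhdsLT_right hLL (by fun_prop), ?_⟩
    rw [oddBoundState, piecewiseIcc_of_mem_Icc ⟨hLL.le, le_rfl⟩]
    simp only [neg_mul, neg_add_cancel, exp_zero, mul_one]
    linear_combination (-lam) * sinh_add_cosh (lam * x) - hres
  · refine ⟨_, _, tendsto_piecewiseIcc_nhdsGT_left hLL (by fun_prop),
      tendsto_piecewiseIcc_nhdsLT_left (by fun_prop), ?_⟩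
    rw [oddBoundState, piecewiseIcc_of_mem_Icc ⟨le_rfl, hLL.le⟩]
    simp only [mul_neg, neg_add_cancel, exp_zero, mul_one, sinh_neg, cosh_neg]
    linear_combination lam * sinh_add_cosh (lam * L) + hres

lemma isLinearBoundState_oddBoundState (hlam : 0 < lam) (hL : 0 < L)
    (hres : lam * exp (lam * L) = ε * sinh (lam * L)) :
    IsLinearBoundState ε L lam (oddBoundState lam L) (oddBoundStateDeriv lam L) :=
  ⟨continuous_oddBoundState hL.le, tendsto_oddBoundState_atTop hlam hL.le,
    tendsto_oddBoundState_atBot hlam, fun _ hxL hxL' =>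
      ⟨hasDerivAt_oddBoundState hL.le hxL hxL', hasDerivAt_oddBoundStateDeriv hL.le hxL hxL'⟩,
    fun _ => oddBoundStateDeriv_jump hL hres⟩

lemma oddBoundState_ne_zero (hlam : 0 < lam) (hL : 0 < L) : oddBoundState lam L ≠ 0 := by
  intro h
  have hψL : oddBoundState lam L L = sinh (lam * L) :=
    piecewiseIcc_of_mem_Icc ⟨by linarith, le_rfl⟩
  rw [h, Pi.zero_apply] at hψL
  exact (sinh_pos_iff.mpr (by positivity)).ne hψL

end OddBoundState

theorem exists_antisymmetric_linear_bound_state_general (ε L lam : ℝ)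
    (hL : 0 < L) (h1 : 0 < lam)
    (h3 : Real.exp (2 * lam * L) * (ε - 2 * lam) = ε) :
    ∃ ψ ψ' : ℝ → ℝ, IsLinearBoundState ε L lam ψ ψ' ∧
      ψ ≠ 0 ∧ (∀ x : ℝ, ψ (-x) = -ψ x) :=
  ⟨oddBoundState lam L, oddBoundStateDeriv lam L,
    isLinearBoundState_oddBoundState h1 hL (mul_exp_eq_mul_sinh_of_exp_mul_sub_eq h3),
    oddBoundState_ne_zero h1 hL, oddBoundState_neg hL.le⟩

/-- if `0 < lam < ε/2` and `e^{2 lam L} (ε - 2 lam) = ε`, there exists a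
nonzero, odd linear bound state. -/
theorem exists_antisymmetric_linear_bound_state (ε L lam : ℝ)
    (hε : 0 < ε) (hL : 0 < L)
    (h1 : 0 < lam) (h2 : lam < ε / 2)
    (h3 : Real.exp (2 * lam * L) * (ε - 2 * lam) = ε) :
    ∃ ψ ψ' : ℝ → ℝ, IsLinearBoundState ε L lam ψ ψ' ∧
      ψ ≠ 0 ∧ (∀ x : ℝ, ψ (-x) = -ψ x) :=
  exists_antisymmetric_linear_bound_state_general ε L lam hL h1 h3
end

section
/- Let ε > 0, L > 0, λ > 0, and suppose there exists a linear bound state ψ (for parameters ε, L, λ) that is not identically zero. Then λ < ε, λ ≠ ε/2, and e^{2λL}·|2λ − ε| = ε; in particular either ε/2 < λ < ε and e^{2λL}(2λ − ε) = ε, or 0 < λ < ε/2 and e^{2λL}(ε − 2λ) = ε. -/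
open Filter Topology Set

lemma constOn {s : Set ℝ} (hs : s.OrdConnected) {f : ℝ → ℝ}
    (hf : ∀ x ∈ s, HasDerivAt f 0 x) : ∀ x ∈ s, ∀ y ∈ s, f x = f y := by
  suffices aux : ∀ a ∈ s, ∀ b ∈ s, a ≤ b → f b = f a by
    intro x hx y hy
    rcases le_total x y with h | h
    · exact (aux x hx y hy h).symm
    · exact aux y hy x hx h
  intro a ha b hb hab
  have hsub : Icc a b ⊆ s := hs.out ha hb
  have hcont : ContinuousOn f (Icc a b) := fun t ht =>
    (hf t (hsub ht)).continuousAt.continuousWithinAt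
  have hderiv : ∀ t ∈ Ico a b, HasDerivWithinAt f 0 (Ici t) t := fun t ht =>
    (hf t (hsub (Ico_subset_Icc_self ht))).hasDerivWithinAt
  exact constant_of_has_deriv_right_zero hcont hderiv b (right_mem_Icc.mpr hab)

lemma solve_interval (lam : ℝ) (hlam : 0 < lam) (ψ ψ' : ℝ → ℝ) (s : Set ℝ)
    (hs : s.OrdConnected)
    (hode : ∀ x ∈ s, HasDerivAt ψ (ψ' x) x ∧ HasDerivAt ψ' (lam ^ 2 * ψ x) x)
    (x₀ : ℝ) (hx₀ : x₀ ∈ s) :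
    ∃ c d : ℝ, ∀ x ∈ s,
      ψ x = c * Real.exp (lam * x) + d * Real.exp (-(lam * x)) ∧
      ψ' x = lam * c * Real.exp (lam * x) - lam * d * Real.exp (-(lam * x)) := by
  set g : ℝ → ℝ := fun x => Real.exp (-(lam * x)) * (ψ' x + lam * ψ x) with hg
  set h : ℝ → ℝ := fun x => Real.exp (lam * x) * (ψ' x - lam * ψ x) with hh
  have hgd : ∀ x ∈ s, HasDerivAt g 0 x := by
    intro x hx
    obtain ⟨h1, h2⟩ := hode x hx
    have he : HasDerivAt (fun x => Real.exp (-(lam * x))) (Real.exp (-(lam * x)) * (-lam)) x := by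
      have : HasDerivAt (fun x : ℝ => -(lam * x)) (-lam) x := by
        simpa using (hasDerivAt_id x).const_mul (-lam)
      exact this.exp
    have hsum : HasDerivAt (fun x => ψ' x + lam * ψ x) (lam ^ 2 * ψ x + lam * ψ' x) x :=
      h2.add (h1.const_mul lam)
    have : HasDerivAt g _ x := he.mul hsum
    convert this using 1
    ring
  have hhd : ∀ x ∈ s, HasDerivAt h 0 x := by
    intro x hx
    obtain ⟨h1, h2⟩ := hode x hx
    have he : HasDerivAt (fun x => Real.exp (lam * x)) (Real.exp (lam * x) * lam) x := by
      have : HasDerivAt (fun x : ℝ => lam * x) lam x := by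
        simpa using (hasDerivAt_id x).const_mul lam
      exact this.exp
    have hsum : HasDerivAt (fun x => ψ' x - lam * ψ x) (lam ^ 2 * ψ x - lam * ψ' x) x :=
      h2.sub (h1.const_mul lam)
    have : HasDerivAt h _ x := he.mul hsum
    convert this using 1
    ring
  refine ⟨g x₀ / (2 * lam), -(h x₀) / (2 * lam), fun x hx => ?_⟩
  have hgx : g x = g x₀ := constOn hs hgd x hx x₀ hx₀
  have hhx : h x = h x₀ := constOn hs hhd x hx x₀ hx₀
  have e1 : Real.exp (-(lam * x)) * (ψ' x + lam * ψ x) = g x₀ := hgx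
  have e2 : Real.exp (lam * x) * (ψ' x - lam * ψ x) = h x₀ := hhx
  have hE : Real.exp (lam * x) * Real.exp (-(lam * x)) = 1 := by
    rw [← Real.exp_add]; simp
  have hl : (2 : ℝ) * lam ≠ 0 := by positivity
  constructor
  · field_simp
    linear_combination Real.exp (lam*x) * e1 - Real.exp (-(lam*x)) * e2 - 2*lam*ψ x*hE
  · field_simp
    linear_combination Real.exp (lam*x) * e1 + Real.exp (-(lam*x)) * e2 - 2*ψ' x*hE

lemma lim_id {f g : ℝ → ℝ} {l : Filter ℝ} [l.NeBot] {y v : ℝ}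
    (hf : Tendsto f l (𝓝 v)) (hg : Continuous g) (hl : l ≤ 𝓝 y)
    (hev : ∀ᶠ x in l, f x = g x) : v = g y :=
  tendsto_nhds_unique_of_eventuallyEq hf ((hg.tendsto y).mono_left hl) hev

set_option maxHeartbeats 1000000 in
/-- if a nonzero linear bound state exists for parameters `ε, L, lam`,
then `lam < ε`, `lam ≠ ε/2`, and `e^{2 lam L} |2 lam - ε| = ε`. -/
theorem linear_bound_state_frequencies (ε L lam : ℝ)
    (hε : 0 < ε) (hL : 0 < L) (hlam : 0 < lam)
    (ψ ψ' : ℝ → ℝ) (hψ : IsLinearBoundState ε L lam ψ ψ') (hne : ψ ≠ 0) :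
    lam < ε ∧ lam ≠ ε / 2 ∧
    Real.exp (2 * lam * L) * |2 * lam - ε| = ε ∧
    ((ε / 2 < lam ∧ lam < ε ∧ Real.exp (2 * lam * L) * (2 * lam - ε) = ε) ∨
     (0 < lam ∧ lam < ε / 2 ∧ Real.exp (2 * lam * L) * (ε - 2 * lam) = ε)) := by
  obtain ⟨hcont, htop, hbot, hode, hjump⟩ := hψ
  -- solve on the three intervals
  obtain ⟨c₁, d₁, h₁⟩ := solve_interval lam hlam ψ ψ' (Iio (-L)) ordConnected_Iio
    (fun x hx => hode x (ne_of_lt (by simp only [mem_Iio] at hx; linarith)) (ne_of_lt hx))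
    (-L - 1) (by simp only [mem_Iio]; linarith)
  obtain ⟨c₂, d₂, h₂⟩ := solve_interval lam hlam ψ ψ' (Ioo (-L) L) ordConnected_Ioo
    (fun x hx => hode x (ne_of_lt hx.2) (ne_of_gt hx.1))
    0 (by simp only [mem_Ioo]; constructor <;> linarith)
  obtain ⟨c₃, d₃, h₃⟩ := solve_interval lam hlam ψ ψ' (Ioi L) ordConnected_Ioi
    (fun x hx => hode x (ne_of_gt hx) (ne_of_gt (by simp only [mem_Ioi] at hx; linarith)))
    (L + 1) (by simp only [mem_Ioi]; linarith)
  -- decay forces d₁ = 0 and c₃ = 0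
  have hexpB : Tendsto (fun x : ℝ => Real.exp (lam * x)) atBot (𝓝 0) :=
    Real.tendsto_exp_atBot.comp (tendsto_id.const_mul_atBot hlam)
  have hexpT : Tendsto (fun x : ℝ => Real.exp (-(lam * x))) atTop (𝓝 0) :=
    Real.tendsto_exp_atBot.comp (tendsto_neg_atTop_atBot.comp (tendsto_id.const_mul_atTop hlam))
  have hd₁ : d₁ = 0 := by
    have hmul : Tendsto (fun x => ψ x * Real.exp (lam * x)) atBot (𝓝 0) := by
      simpa using hbot.mul hexpB
    have hform : Tendsto (fun x => c₁ * Real.exp (lam * x) ^ 2 + d₁) atBot (𝓝 d₁) := by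
      have := ((hexpB.pow 2).const_mul c₁).add (tendsto_const_nhds (x := d₁))
      simpa using this
    have hev : ∀ᶠ x in atBot, ψ x * Real.exp (lam * x)
        = c₁ * Real.exp (lam * x) ^ 2 + d₁ := by
      filter_upwards [eventually_lt_atBot (-L)] with x hx
      have hE : Real.exp (-(lam * x)) * Real.exp (lam * x) = 1 := by rw [← Real.exp_add]; simp
      linear_combination Real.exp (lam * x) * (h₁ x hx).1 + d₁ * hE
    exact (tendsto_nhds_unique_of_eventuallyEq hmul hform hev).symm
  have hc₃ : c₃ = 0 := by
    have hmul : Tendsto (fun x => ψ x * Real.exp (-(lam * x))) atTop (𝓝 0) := by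
      simpa using htop.mul hexpT
    have hform : Tendsto (fun x => c₃ + d₃ * Real.exp (-(lam * x)) ^ 2) atTop (𝓝 c₃) := by
      have := (tendsto_const_nhds (x := c₃)).add ((hexpT.pow 2).const_mul d₃)
      simpa using this
    have hev : ∀ᶠ x in atTop, ψ x * Real.exp (-(lam * x))
        = c₃ + d₃ * Real.exp (-(lam * x)) ^ 2 := by
      filter_upwards [eventually_gt_atTop L] with x hx
      have hE : Real.exp (lam * x) * Real.exp (-(lam * x)) = 1 := by rw [← Real.exp_add]; simp
      linear_combination Real.exp (-(lam * x)) * (h₃ x hx).1 + c₃ * hE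
    exact (tendsto_nhds_unique_of_eventuallyEq hmul hform hev).symm
  subst hd₁ hc₃
  -- boundary values and one-sided derivative limits
  obtain ⟨a, b, haR, hbL, hjmp⟩ := hjump L (Or.inl rfl)
  obtain ⟨a', b', haR', hbL', hjmp'⟩ := hjump (-L) (Or.inr rfl)
  have hmemL : Ioo (-L) L ∈ 𝓝[<] L := Ioo_mem_nhdsLT_of_mem ⟨by linarith, le_refl L⟩
  have hmemR : Ioo (-L) L ∈ 𝓝[>] (-L) := Ioo_mem_nhdsGT_of_mem ⟨le_refl _, by linarith⟩
  have eψLr : ψ L = 0 * Real.exp (lam * L) + d₃ * Real.exp (-(lam * L)) :=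
    lim_id (g := fun x => 0 * Real.exp (lam * x) + d₃ * Real.exp (-(lam * x)))
      ((hcont.tendsto L).mono_left nhdsWithin_le_nhds) (by fun_prop) nhdsWithin_le_nhds
      (eventually_of_mem self_mem_nhdsWithin (fun x hx => (h₃ x hx).1))
  have eψLl : ψ L = c₂ * Real.exp (lam * L) + d₂ * Real.exp (-(lam * L)) :=
    lim_id (g := fun x => c₂ * Real.exp (lam * x) + d₂ * Real.exp (-(lam * x)))
      ((hcont.tendsto L).mono_left nhdsWithin_le_nhds) (by fun_prop) nhdsWithin_le_nhds
      (eventually_of_mem hmemL (fun x hx => (h₂ x hx).1))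
  have ea : a = lam * 0 * Real.exp (lam * L) - lam * d₃ * Real.exp (-(lam * L)) :=
    lim_id (g := fun x => lam * 0 * Real.exp (lam * x) - lam * d₃ * Real.exp (-(lam * x)))
      haR (by fun_prop) nhdsWithin_le_nhds
      (eventually_of_mem self_mem_nhdsWithin (fun x hx => (h₃ x hx).2))
  have eb : b = lam * c₂ * Real.exp (lam * L) - lam * d₂ * Real.exp (-(lam * L)) :=
    lim_id (g := fun x => lam * c₂ * Real.exp (lam * x) - lam * d₂ * Real.exp (-(lam * x)))
      hbL (by fun_prop) nhdsWithin_le_nhds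
      (eventually_of_mem hmemL (fun x hx => (h₂ x hx).2))
  have eψmL : ψ (-L) = c₁ * Real.exp (lam * (-L)) + 0 * Real.exp (-(lam * (-L))) :=
    lim_id (g := fun x => c₁ * Real.exp (lam * x) + 0 * Real.exp (-(lam * x)))
      ((hcont.tendsto (-L)).mono_left nhdsWithin_le_nhds) (by fun_prop) nhdsWithin_le_nhds
      (eventually_of_mem self_mem_nhdsWithin (fun x hx => (h₁ x hx).1))
  have eψmL' : ψ (-L) = c₂ * Real.exp (lam * (-L)) + d₂ * Real.exp (-(lam * (-L))) :=
    lim_id (g := fun x => c₂ * Real.exp (lam * x) + d₂ * Real.exp (-(lam * x)))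
      ((hcont.tendsto (-L)).mono_left nhdsWithin_le_nhds) (by fun_prop) nhdsWithin_le_nhds
      (eventually_of_mem hmemR (fun x hx => (h₂ x hx).1))
  have ea' : a' = lam * c₂ * Real.exp (lam * (-L)) - lam * d₂ * Real.exp (-(lam * (-L))) :=
    lim_id (g := fun x => lam * c₂ * Real.exp (lam * x) - lam * d₂ * Real.exp (-(lam * x)))
      haR' (by fun_prop) nhdsWithin_le_nhds
      (eventually_of_mem hmemR (fun x hx => (h₂ x hx).2))
  have eb' : b' = lam * c₁ * Real.exp (lam * (-L)) - lam * 0 * Real.exp (-(lam * (-L))) :=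
    lim_id (g := fun x => lam * c₁ * Real.exp (lam * x) - lam * 0 * Real.exp (-(lam * x)))
      hbL' (by fun_prop) nhdsWithin_le_nhds
      (eventually_of_mem self_mem_nhdsWithin (fun x hx => (h₁ x hx).2))
  have eneg1 : Real.exp (lam * (-L)) = Real.exp (-(lam * L)) := by rw [mul_neg]
  have eneg2 : Real.exp (-(lam * (-L))) = Real.exp (lam * L) := by rw [mul_neg, neg_neg]
  rw [eneg1, eneg2] at eψmL eψmL' ea' eb'
  -- basic exponential facts
  have hst : Real.exp (lam * L) * Real.exp (-(lam * L)) = 1 := by rw [← Real.exp_add]; simp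
  have hs0 : (0:ℝ) < Real.exp (-(lam * L)) := Real.exp_pos _
  have ht0 : (0:ℝ) < Real.exp (lam * L) := Real.exp_pos _
  have ht1 : 1 < Real.exp (lam * L) := by
    have : Real.exp 0 < Real.exp (lam * L) := Real.exp_lt_exp.mpr (by positivity)
    simpa using this
  -- the matching equations
  have E1 : d₃ * Real.exp (-(lam * L)) = c₂ * Real.exp (lam * L) + d₂ * Real.exp (-(lam * L)) := by
    linear_combination eψLl - eψLr
  have E2 : c₁ * Real.exp (-(lam * L)) = c₂ * Real.exp (-(lam * L)) + d₂ * Real.exp (lam * L) := by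
    linear_combination eψmL' - eψmL
  -- d₃ ≠ 0
  have hBne : d₃ ≠ 0 := by
    intro hB0
    have hbv : lam * c₂ * Real.exp (lam * L) - lam * d₂ * Real.exp (-(lam * L)) = 0 := by
      linear_combination -eb - hjmp + ea + ε * eψLr + (ε - lam) * Real.exp (-(lam*L)) * hB0
    have hCt : c₂ * Real.exp (lam * L) + d₂ * Real.exp (-(lam * L)) = 0 := by
      linear_combination -E1 + Real.exp (-(lam*L)) * hB0
    have hd₂ : d₂ = 0 := by
      have h2 : (2 * lam * Real.exp (-(lam * L))) * d₂ = 0 := by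
        linear_combination lam * hCt - hbv
      exact (mul_eq_zero.mp h2).resolve_left (by positivity)
    have hc₂ : c₂ = 0 := by
      have h2 : c₂ * Real.exp (lam * L) = 0 := by
        linear_combination hCt - Real.exp (-(lam*L)) * hd₂
      exact (mul_eq_zero.mp h2).resolve_right (Real.exp_ne_zero _)
    have hc₁ : c₁ = 0 := by
      have h2 : c₁ * Real.exp (-(lam * L)) = 0 := by
        linear_combination E2 + Real.exp (-(lam*L)) * hc₂ + Real.exp (lam*L) * hd₂
      exact (mul_eq_zero.mp h2).resolve_right (Real.exp_ne_zero _)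
    apply hne
    funext x
    show ψ x = 0
    rcases lt_trichotomy x (-L) with h | h | h
    · rw [(h₁ x h).1, hc₁]; ring
    · rw [h, eψmL, hc₁]; ring
    · rcases lt_trichotomy x L with h' | h' | h'
      · rw [(h₂ x ⟨h, h'⟩).1, hc₂, hd₂]; ring
      · rw [h', eψLr, hB0]; ring
      · rw [(h₃ x h').1, hB0]; ring
  -- algebraic elimination
  have k1s : (2 * lam * d₂) * Real.exp (-(lam * L))
      = ((2 * lam - ε) * d₃) * Real.exp (-(lam * L)) := by
    linear_combination hjmp - ea + eb - ε * eψLr - lam * E1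
  have k1 : 2 * lam * d₂ = (2 * lam - ε) * d₃ :=
    mul_right_cancel₀ (ne_of_gt hs0) k1s
  have k2s : (ε * c₁) * Real.exp (-(lam * L)) = (2 * lam * d₂) * Real.exp (lam * L) := by
    linear_combination hjmp' - ea' + eb' - ε * eψmL + lam * E2
  have k2' : ε * c₁ = 2 * lam * d₂ * Real.exp (lam * L) ^ 2 := by
    linear_combination Real.exp (lam * L) * k2s - ε * c₁ * hst
  have k3 : d₃ = c₂ * Real.exp (lam * L) ^ 2 + d₂ := by
    linear_combination Real.exp (lam * L) * E1 - (d₃ - d₂) * hst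
  have k4 : c₁ = c₂ + d₂ * Real.exp (lam * L) ^ 2 := by
    linear_combination Real.exp (lam * L) * E2 - (c₁ - c₂) * hst
  have k5 : ε * c₂ = (2 * lam - ε) * d₂ * Real.exp (lam * L) ^ 2 := by
    linear_combination k2' - ε * k4
  have keyB : ((2 * lam - ε) ^ 2 * Real.exp (lam * L) ^ 4 - ε ^ 2) * d₃ = 0 := by
    linear_combination (-(2 * lam * ε)) * k3 - 2 * lam * Real.exp (lam * L) ^ 2 * k5
      - (2 * lam - ε) * Real.exp (lam * L) ^ 4 * k1 - ε * k1
  have key : (2 * lam - ε) ^ 2 * Real.exp (lam * L) ^ 4 = ε ^ 2 := by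
    have h := (mul_eq_zero.mp keyB).resolve_right hBne
    linarith
  -- consequences
  have hexp2 : Real.exp (2 * lam * L) = Real.exp (lam * L) ^ 2 := by
    rw [show 2 * lam * L = lam * L + lam * L by ring, Real.exp_add, sq]
  have habs : |2 * lam - ε| * Real.exp (lam * L) ^ 2 = ε := by
    have h1 : (|2 * lam - ε| * Real.exp (lam * L) ^ 2) ^ 2 = ε ^ 2 := by
      rw [mul_pow, sq_abs]; linear_combination key
    have h2 : 0 ≤ |2 * lam - ε| * Real.exp (lam * L) ^ 2 := by positivity
    have h3 : (|2 * lam - ε| * Real.exp (lam * L) ^ 2 - ε) *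
        (|2 * lam - ε| * Real.exp (lam * L) ^ 2 + ε) = 0 := by linear_combination h1
    rcases mul_eq_zero.mp h3 with h4 | h4
    · linarith
    · linarith
  have hneq : lam ≠ ε / 2 := by
    intro h
    rw [h] at key
    have h0 : (0:ℝ) = ε ^ 2 := by linear_combination key
    nlinarith
  have ht2 : 1 < Real.exp (lam * L) ^ 2 := by nlinarith
  have habslt : |2 * lam - ε| < ε := by
    rcases eq_or_lt_of_le (abs_nonneg (2 * lam - ε)) with h | h
    · linarith [h.symm]
    · nlinarith [habs, ht2, h]
  have hlt : lam < ε := by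
    have := (abs_lt.mp habslt).2
    linarith
  refine ⟨hlt, hneq, ?_, ?_⟩
  · rw [hexp2]; linear_combination habs
  · rcases lt_trichotomy lam (ε / 2) with h | h | h
    · refine Or.inr ⟨hlam, h, ?_⟩
      have h2 : |2 * lam - ε| = ε - 2 * lam := by rw [abs_of_neg (by linarith)]; ring
      rw [hexp2, ← h2]; linear_combination habs
    · exact absurd h hneq
    · refine Or.inl ⟨h, hlt, ?_⟩
      have h2 : |2 * lam - ε| = 2 * lam - ε := abs_of_pos (by linarith)
      rw [hexp2, ← h2]; linear_combination habs
end

section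
/- Let ε > 0, L > 0, λ > 0, and let ψ₁ and ψ₂ be two linear bound states for the same parameters ε, L, λ, neither identically zero. Then ψ₁ and ψ₂ are proportional: there exists a real constant c ≠ 0 with ψ₂(x) = c·ψ₁(x) for all x. In other words, for fixed parameters the space of linear bound states is at most one-dimensional. -/
open Filter Topology Set

/-!
Away from `±L`, `ψ'' = λ²ψ` has the first integrals `A = (ψ' + λψ) e^{-λx}` and
`B = (ψ' - λψ) e^{λx}`, and `2λψ = A e^{λx} - B e^{-λx}`. Decay at `+∞` therefore forces `A = 0`,
i.e. `ψ' = -λψ`, on `(L, ∞)`; and on any interval both first integrals vanish as soon as `ψ` and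
`ψ'` tend to `0` at an endpoint, whence `ψ = 0` there. So a bound state with `ψ(L) = 0` vanishes
on `(L, ∞)`, the jump condition carries the zero Cauchy data across `L` and then across `-L`, and
`ψ ≡ 0`. Thus `ψ ↦ ψ(L)` is injective on the vector space of bound states.
-/

def SolvesODEOn (lam : ℝ) (ψ ψ' : ℝ → ℝ) (s : Set ℝ) : Prop :=
  ∀ x ∈ s, HasDerivAt ψ (ψ' x) x ∧ HasDerivAt ψ' (lam ^ 2 * ψ x) x

noncomputable def firstIntegral (σ : ℝ) (ψ ψ' : ℝ → ℝ) (x : ℝ) : ℝ :=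
  (ψ' x + σ * ψ x) * Real.exp (-(σ * x))

theorem firstIntegral_eq_zero_iff {σ : ℝ} {ψ ψ' : ℝ → ℝ} {x : ℝ} :
    firstIntegral σ ψ ψ' x = 0 ↔ ψ' x + σ * ψ x = 0 := by
  simp [firstIntegral, Real.exp_ne_zero]

theorem hasDerivAt_firstIntegral {lam σ : ℝ} {ψ ψ' : ℝ → ℝ} (hσ : σ ^ 2 = lam ^ 2) {x : ℝ}
    (h₁ : HasDerivAt ψ (ψ' x) x) (h₂ : HasDerivAt ψ' (lam ^ 2 * ψ x) x) :
    HasDerivAt (firstIntegral σ ψ ψ') 0 x := by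
  have hexp : HasDerivAt (fun y => Real.exp (-(σ * y))) (-σ * Real.exp (-(σ * x))) x := by
    simpa [mul_comm] using ((hasDerivAt_id x).const_mul σ).neg.exp
  show HasDerivAt (fun y => (ψ' y + σ * ψ y) * Real.exp (-(σ * y))) 0 x
  refine ((h₂.add (h₁.const_mul σ)).mul hexp).congr_deriv ?_
  simp only [Pi.add_apply]
  linear_combination (-(ψ x * Real.exp (-(σ * x)))) * hσ

namespace SolvesODEOn

variable {lam σ : ℝ} {ψ ψ' : ℝ → ℝ} {s : Set ℝ}

theorem exists_firstIntegral_eq (h : SolvesODEOn lam ψ ψ' s) (hs : IsOpen s)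
    (hs' : IsPreconnected s) (hσ : σ ^ 2 = lam ^ 2) :
    ∃ A, ∀ x ∈ s, firstIntegral σ ψ ψ' x = A := by
  have hderiv : ∀ x ∈ s, HasDerivAt (firstIntegral σ ψ ψ') 0 x :=
    fun x hx => hasDerivAt_firstIntegral hσ (h x hx).1 (h x hx).2
  exact hs.exists_is_const_of_deriv_eq_zero hs'
    (fun x hx => (hderiv x hx).differentiableAt.differentiableWithinAt)
    (fun x hx => (hderiv x hx).deriv)

theorem firstIntegral_eq_of_tendsto (h : SolvesODEOn lam ψ ψ' s) (hs : IsOpen s)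
    (hs' : IsPreconnected s) (hσ : σ ^ 2 = lam ^ 2) {l : Filter ℝ} [l.NeBot] (hsl : s ∈ l)
    {A : ℝ} (hA : Tendsto (firstIntegral σ ψ ψ') l (𝓝 A)) :
    ∀ x ∈ s, firstIntegral σ ψ ψ' x = A := by
  obtain ⟨a, ha⟩ := h.exists_firstIntegral_eq hs hs' hσ
  have haA : a = A := tendsto_nhds_unique
    (tendsto_const_nhds.congr' (eventually_of_mem hsl fun x hx => (ha x hx).symm)) hA
  exact fun x hx => (ha x hx).trans haA

theorem add_mul_eq_zero_of_tendsto (h : SolvesODEOn lam ψ ψ' s) (hs : IsOpen s)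
    (hs' : IsPreconnected s) (hσ : σ ^ 2 = lam ^ 2) {l : Filter ℝ} [l.NeBot] (hsl : s ∈ l)
    (hexp : Tendsto (fun x => Real.exp (-(σ * x))) l (𝓝 0)) (hψ : Tendsto ψ l (𝓝 0)) :
    ∀ x ∈ s, ψ' x + σ * ψ x = 0 := by
  obtain ⟨B, hB⟩ := h.exists_firstIntegral_eq hs hs' (σ := -σ) (by rw [neg_sq, hσ])
  -- `2σψ = A e^{σx} - B e^{-σx}`, so `A` is the limit of `(2σψ + B e^{-σx}) e^{-σx}`.
  have hA : ∀ x ∈ s,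
      firstIntegral σ ψ ψ' x = (2 * σ * ψ x + B * Real.exp (-(σ * x))) * Real.exp (-(σ * x)) := by
    intro x hx
    have hexp_mul : Real.exp (-(-σ * x)) * Real.exp (-(σ * x)) = 1 := by
      rw [← Real.exp_add]; ring_nf; exact Real.exp_zero
    rw [← hB x hx, firstIntegral, firstIntegral]
    linear_combination (-(ψ' x - σ * ψ x) * Real.exp (-(σ * x))) * hexp_mul
  have hlim : Tendsto (firstIntegral σ ψ ψ') l (𝓝 0) := by
    refine Tendsto.congr' (eventually_of_mem hsl fun x hx => (hA x hx).symm) ?_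
    simpa using ((hψ.const_mul (2 * σ)).add (hexp.const_mul B)).mul hexp
  exact fun x hx =>
    firstIntegral_eq_zero_iff.1 (h.firstIntegral_eq_of_tendsto hs hs' hσ hsl hlim x hx)

theorem eqOn_zero_of_tendsto (h : SolvesODEOn lam ψ ψ' s) (hs : IsOpen s)
    (hs' : IsPreconnected s) (hlam : lam ≠ 0) {l : Filter ℝ} [l.NeBot] (hsl : s ∈ l) {c : ℝ}
    (hlc : l ≤ 𝓝 c) (hψ : Tendsto ψ l (𝓝 0)) (hψ' : Tendsto ψ' l (𝓝 0)) :
    ∀ x ∈ s, ψ x = 0 ∧ ψ' x = 0 := by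
  have hsum : ∀ σ : ℝ, σ ^ 2 = lam ^ 2 → ∀ x ∈ s, ψ' x + σ * ψ x = 0 := by
    intro σ hσ x hx
    have hexp : Tendsto (fun y => Real.exp (-(σ * y))) l (𝓝 (Real.exp (-(σ * c)))) :=
      ((by fun_prop : Continuous fun y => Real.exp (-(σ * y))).tendsto c).mono_left hlc
    have hlim : Tendsto (firstIntegral σ ψ ψ') l (𝓝 ((0 + σ * 0) * Real.exp (-(σ * c)))) :=
      (hψ'.add (hψ.const_mul σ)).mul hexp
    rw [mul_zero, add_zero, zero_mul] at hlim
    exact firstIntegral_eq_zero_iff.1 (h.firstIntegral_eq_of_tendsto hs hs' hσ hsl hlim x hx)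
  intro x hx
  have hpos := hsum lam rfl x hx
  have hneg := hsum (-lam) (neg_sq lam) x hx
  have hψx : ψ x = 0 := by
    have : 2 * lam * ψ x = 0 := by linear_combination hpos - hneg
    simpa [hlam] using this
  exact ⟨hψx, by linear_combination hpos - lam * hψx⟩

end SolvesODEOn

namespace IsLinearBoundState

variable {ε L lam : ℝ} {ψ ψ' φ φ' : ℝ → ℝ}

theorem sub (hψ : IsLinearBoundState ε L lam ψ ψ') (hφ : IsLinearBoundState ε L lam φ φ') :
    IsLinearBoundState ε L lam (ψ - φ) (ψ' - φ') := by
  obtain ⟨hC, hTop, hBot, hODE, hJump⟩ := hψ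
  obtain ⟨gC, gTop, gBot, gODE, gJump⟩ := hφ
  refine ⟨hC.sub gC, ?_, ?_, fun x h₁ h₂ => ?_, fun x hx => ?_⟩
  · rw [← sub_zero (0 : ℝ)]; exact hTop.sub gTop
  · rw [← sub_zero (0 : ℝ)]; exact hBot.sub gBot
  · obtain ⟨d₁, d₂⟩ := hODE x h₁ h₂
    obtain ⟨e₁, e₂⟩ := gODE x h₁ h₂
    exact ⟨d₁.sub e₁, (d₂.sub e₂).congr_deriv (by simp only [Pi.sub_apply]; ring)⟩
  · obtain ⟨a, b, ha, hb, hab⟩ := hJump x hx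
    obtain ⟨a', b', ha', hb', hab'⟩ := gJump x hx
    exact ⟨a - a', b - b', ha.sub ha', hb.sub hb', by
      simp only [Pi.sub_apply]; linear_combination hab - hab'⟩

theorem const_smul (h : IsLinearBoundState ε L lam ψ ψ') (c : ℝ) :
    IsLinearBoundState ε L lam (c • ψ) (c • ψ') := by
  obtain ⟨hC, hTop, hBot, hODE, hJump⟩ := h
  refine ⟨hC.const_smul c, ?_, ?_, fun x h₁ h₂ => ?_, fun x hx => ?_⟩
  · rw [← smul_zero c]; exact hTop.const_smul c
  · rw [← smul_zero c]; exact hBot.const_smul c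
  · obtain ⟨d₁, d₂⟩ := hODE x h₁ h₂
    refine ⟨d₁.const_smul c, (d₂.const_smul c).congr_deriv ?_⟩
    simp only [Pi.smul_apply, smul_eq_mul]
    ring
  · obtain ⟨a, b, ha, hb, hab⟩ := hJump x hx
    exact ⟨c * a, c * b, ha.const_smul c, hb.const_smul c, by
      simp only [Pi.smul_apply, smul_eq_mul]; linear_combination c * hab⟩

theorem solvesODEOn (h : IsLinearBoundState ε L lam ψ ψ') {s : Set ℝ}
    (hs : ∀ x ∈ s, x ≠ L ∧ x ≠ -L) : SolvesODEOn lam ψ ψ' s :=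
  fun x hx => h.2.2.2.1 x (hs x hx).1 (hs x hx).2

theorem tendsto_deriv_nhdsLT_zero (h : IsLinearBoundState ε L lam ψ ψ') {p : ℝ}
    (hp : p = L ∨ p = -L) (hψp : ψ p = 0) (hψ' : Tendsto ψ' (𝓝[>] p) (𝓝 0)) :
    Tendsto ψ' (𝓝[<] p) (𝓝 0) := by
  obtain ⟨a, b, ha, hb, hab⟩ := h.2.2.2.2 p hp
  obtain rfl : a = 0 := tendsto_nhds_unique ha hψ'
  rwa [show b = 0 by linear_combination -hab + ε * hψp] at hb

theorem eqOn_zero_of_tendsto (h : IsLinearBoundState ε L lam ψ ψ') (hlam : lam ≠ 0)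
    {s : Set ℝ} (hs : IsOpen s) (hs' : IsPreconnected s) (hsL : ∀ x ∈ s, x ≠ L ∧ x ≠ -L)
    {p : ℝ} {t : Set ℝ} [(𝓝[t] p).NeBot] (hst : s ∈ 𝓝[t] p) (hψp : ψ p = 0)
    (hψ' : Tendsto ψ' (𝓝[t] p) (𝓝 0)) : ∀ x ∈ s, ψ x = 0 ∧ ψ' x = 0 :=
  (h.solvesODEOn hsL).eqOn_zero_of_tendsto hs hs' hlam hst nhdsWithin_le_nhds
    (hψp ▸ (h.1.tendsto p).mono_left nhdsWithin_le_nhds) hψ'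

theorem eq_zero_of_apply_eq_zero (h : IsLinearBoundState ε L lam ψ ψ') (hL : 0 < L)
    (hlam : 0 < lam) (h0 : ψ L = 0) : ψ = 0 := by
  have hR : ∀ x ∈ Ioi L, x ≠ L ∧ x ≠ -L := fun x (hx : L < x) => ⟨hx.ne', by linarith⟩
  have hexp : Tendsto (fun x => Real.exp (-(lam * x))) atTop (𝓝 0) :=
    Real.tendsto_exp_neg_atTop_nhds_zero.comp (tendsto_id.const_mul_atTop hlam)
  have hdecay : ∀ x ∈ Ioi L, ψ' x + lam * ψ x = 0 :=
    (h.solvesODEOn hR).add_mul_eq_zero_of_tendsto isOpen_Ioi isPreconnected_Ioi rfl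
      (Ioi_mem_atTop L) hexp h.2.1
  have hψ'R : Tendsto ψ' (𝓝[>] L) (𝓝 0) := by
    have hlim : Tendsto (fun x => -lam * ψ x) (𝓝[>] L) (𝓝 0) := by
      simpa [h0] using ((h.1.tendsto L).mono_left nhdsWithin_le_nhds).const_mul (-lam)
    exact hlim.congr' (eventually_of_mem self_mem_nhdsWithin fun x hx => by
      linear_combination -hdecay x hx)
  have hzR := h.eqOn_zero_of_tendsto hlam.ne' isOpen_Ioi isPreconnected_Ioi hR
    self_mem_nhdsWithin h0 hψ'R
  have hzM := h.eqOn_zero_of_tendsto hlam.ne' isOpen_Ioo isPreconnected_Ioo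
    (fun x hx => ⟨hx.2.ne, hx.1.ne'⟩) (Ioo_mem_nhdsLT (by linarith)) h0
    (h.tendsto_deriv_nhdsLT_zero (Or.inl rfl) h0 hψ'R)
  have hM : Ioo (-L) L ∈ 𝓝[>] (-L) := Ioo_mem_nhdsGT (by linarith)
  have hψ'M : Tendsto ψ' (𝓝[>] (-L)) (𝓝 0) :=
    tendsto_const_nhds.congr' (eventually_of_mem hM fun x hx => (hzM x hx).2.symm)
  have hm0 : ψ (-L) = 0 :=
    tendsto_nhds_unique ((h.1.tendsto (-L)).mono_left nhdsWithin_le_nhds)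
      (tendsto_const_nhds.congr' (eventually_of_mem hM fun x hx => (hzM x hx).1.symm))
  have hzL := h.eqOn_zero_of_tendsto hlam.ne' isOpen_Iio isPreconnected_Iio
    (fun x (hx : x < -L) => ⟨by linarith, hx.ne⟩) self_mem_nhdsWithin hm0
    (h.tendsto_deriv_nhdsLT_zero (Or.inr rfl) hm0 hψ'M)
  funext x
  rcases lt_trichotomy x (-L) with hx | rfl | hx
  · exact (hzL x hx).1
  · exact hm0
  rcases lt_trichotomy x L with hx' | rfl | hx'
  · exact (hzM x ⟨hx, hx'⟩).1
  · exact h0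
  · exact (hzR x hx').1

end IsLinearBoundState

theorem linear_bound_state_unique_up_to_scaling_general (ε L lam : ℝ)
    (hL : 0 < L) (hlam : 0 < lam)
    (ψ₁ ψ₁' ψ₂ ψ₂' : ℝ → ℝ)
    (h₁ : IsLinearBoundState ε L lam ψ₁ ψ₁') (hne₁ : ψ₁ ≠ 0)
    (h₂ : IsLinearBoundState ε L lam ψ₂ ψ₂') (hne₂ : ψ₂ ≠ 0) :
    ∃ c : ℝ, c ≠ 0 ∧ ∀ x : ℝ, ψ₂ x = c * ψ₁ x := by
  have hψ₁L : ψ₁ L ≠ 0 := fun h0 => hne₁ (h₁.eq_zero_of_apply_eq_zero hL hlam h0)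
  have hψ₂L : ψ₂ L ≠ 0 := fun h0 => hne₂ (h₂.eq_zero_of_apply_eq_zero hL hlam h0)
  set c := ψ₂ L / ψ₁ L
  have hzero : ψ₂ - c • ψ₁ = 0 := (h₂.sub (h₁.const_smul c)).eq_zero_of_apply_eq_zero hL hlam
    (by simp [c, hψ₁L])
  refine ⟨c, div_ne_zero hψ₂L hψ₁L, fun x => ?_⟩
  simpa [sub_eq_zero] using congrFun hzero x

/-- two nonzero linear bound states for the same parameters are
proportional; the space of linear bound states is at most one-dimensional. -/
theorem linear_bound_state_unique_up_to_scaling (ε L lam : ℝ)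
    (hε : 0 < ε) (hL : 0 < L) (hlam : 0 < lam)
    (ψ₁ ψ₁' ψ₂ ψ₂' : ℝ → ℝ)
    (h₁ : IsLinearBoundState ε L lam ψ₁ ψ₁') (hne₁ : ψ₁ ≠ 0)
    (h₂ : IsLinearBoundState ε L lam ψ₂ ψ₂') (hne₂ : ψ₂ ≠ 0) :
    ∃ c : ℝ, c ≠ 0 ∧ ∀ x : ℝ, ψ₂ x = c * ψ₁ x :=
  linear_bound_state_unique_up_to_scaling_general ε L lam hL hlam ψ₁ ψ₁' ψ₂ ψ₂' h₁ hne₁ h₂ hne₂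
end

section
/- Let ε > 0. For L > 1/ε, let λ₊(L) denote the unique λ ∈ (ε/2, ε) with (2λ − ε)e^{2λL} = ε, and let λ₋(L) denote the unique λ ∈ (0, ε/2) with (ε − 2λ)e^{2λL} = ε. Then, as L → ∞: e^{εL}·(λ₊(L) − ε/2) → ε/2, e^{εL}·(ε/2 − λ₋(L)) → ε/2, and e^{εL}·(λ₊(L) − λ₋(L)) → ε. In particular λ₊(L) − λ₋(L) ∼ ε e^{−εL} for large εL. -/
/-!
Put `d₊ = 2λ₊ - ε` and `d₋ = ε - 2λ₋`. Each secular equation reads `d e^{(ε ∓ d)L} = ε`, i.e.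
`e^{εL} d = ε e^{∓dL}`, so it suffices to show `d L → 0`. Since `d L = (e^{εL} d) · L e^{-εL}`
and `L e^{-εL} → 0`, this follows once `e^{εL} d = ε e^{∓dL}` is bounded, i.e. once `∓dL ≤ 1`.
For `d₊ > 0` this is clear; for `d₋` it follows from `1 + x ≤ eˣ` applied to `x = 2λ₋L`.
-/

open Set Filter Topology Real

lemma tendsto_mul_exp_neg_mul_atTop_nhds_zero {ε : ℝ} (hε : 0 < ε) :
    Tendsto (fun L : ℝ => L * exp (-(ε * L))) atTop (𝓝 0) := by
  have h := (tendsto_pow_mul_exp_neg_atTop_nhds_zero 1).comp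
    (tendsto_id.const_mul_atTop hε)
  simpa [Function.comp_def, mul_assoc, hε.ne'] using h.const_mul ε⁻¹

lemma mul_le_one_of_mul_exp_mul_eq_add {a d L : ℝ} (ha : 0 < a) (hd : 0 ≤ d)
    (h : d * exp (a * L) = d + a) : d * L ≤ 1 := by
  have hexp : d * (a * L + 1) ≤ d + a := h ▸ mul_le_mul_of_nonneg_left (add_one_le_exp _) hd
  nlinarith

lemma exp_mul_eq_of_mul_exp_sub_mul_eq {ε σ d L : ℝ} (h : d * exp ((ε - σ * d) * L) = ε) :
    exp (ε * L) * d = ε * exp (σ * (d * L)) := by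
  calc exp (ε * L) * d = d * exp ((ε - σ * d) * L + σ * (d * L)) := by ring_nf
    _ = ε * exp (σ * (d * L)) := by rw [exp_add, ← mul_assoc, h]

theorem tendsto_exp_mul_of_mul_exp_sub_mul_eq {ε σ : ℝ} {d : ℝ → ℝ} (hε : 0 < ε)
    (heq : ∀ᶠ L in atTop, d L * exp ((ε - σ * d L) * L) = ε)
    (hle : ∀ᶠ L in atTop, σ * (d L * L) ≤ 1) :
    Tendsto (fun L => exp (ε * L) * d L) atTop (𝓝 ε) := by
  have hid : ∀ᶠ L in atTop, ε * exp (σ * (d L * L)) = exp (ε * L) * d L :=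
    heq.mono fun L h => (exp_mul_eq_of_mul_exp_sub_mul_eq h).symm
  have hbdd : ∀ᶠ L in atTop, ‖exp (ε * L) * d L‖ ≤ ε * exp 1 := by
    filter_upwards [hid, hle] with L hL hσ
    rw [← hL, norm_mul, norm_of_nonneg hε.le, norm_of_nonneg (exp_pos _).le]
    gcongr
  have hsmall : Tendsto (fun L => d L * L) atTop (𝓝 0) := by
    refine (isBoundedUnder_le_mul_tendsto_zero (isBoundedUnder_of_eventually_le hbdd)
      (tendsto_mul_exp_neg_mul_atTop_nhds_zero hε)).congr fun L => ?_
    rw [show exp (ε * L) * d L * (L * exp (-(ε * L))) = exp (ε * L) * exp (-(ε * L)) * (d L * L)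
      by ring, ← exp_add, add_neg_cancel, exp_zero, one_mul]
  have hlim := ((continuous_exp.tendsto _).comp (hsmall.const_mul σ)).const_mul ε
  rw [mul_zero, exp_zero, mul_one] at hlim
  exact hlim.congr' hid

/-- asymptotics of the symmetric and antisymmetric linear bound state
frequencies for large well separation: `e^{εL}(λ₊(L) - ε/2) → ε/2`,
`e^{εL}(ε/2 - λ₋(L)) → ε/2` and `e^{εL}(λ₊(L) - λ₋(L)) → ε` as `L → ∞`. -/
theorem eigenvalue_splitting_asymptotics (ε : ℝ) (hε : 0 < ε)
    (lamPlus lamMinus : ℝ → ℝ)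
    (hPlus : ∀ L : ℝ, 1 / ε < L →
      lamPlus L ∈ Ioo (ε / 2) ε ∧
      (2 * lamPlus L - ε) * Real.exp (2 * lamPlus L * L) = ε)
    (hMinus : ∀ L : ℝ, 1 / ε < L →
      lamMinus L ∈ Ioo 0 (ε / 2) ∧
      (ε - 2 * lamMinus L) * Real.exp (2 * lamMinus L * L) = ε) :
    Tendsto (fun L => Real.exp (ε * L) * (lamPlus L - ε / 2)) atTop (𝓝 (ε / 2)) ∧
    Tendsto (fun L => Real.exp (ε * L) * (ε / 2 - lamMinus L)) atTop (𝓝 (ε / 2)) ∧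
    Tendsto (fun L => Real.exp (ε * L) * (lamPlus L - lamMinus L)) atTop (𝓝 ε) := by
  have hL : ∀ᶠ L in atTop, 1 / ε < L := eventually_gt_atTop _
  have hP : Tendsto (fun L => exp (ε * L) * (2 * lamPlus L - ε)) atTop (𝓝 ε) := by
    refine tendsto_exp_mul_of_mul_exp_sub_mul_eq (σ := -1) hε ?_ ?_ <;>
      filter_upwards [hL] with L hLε <;> obtain ⟨⟨hlo, -⟩, h⟩ := hPlus L hLε
    · rwa [show (ε - -1 * (2 * lamPlus L - ε)) * L = 2 * lamPlus L * L by ring]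
    · have hL0 : 0 < L := (one_div_pos.mpr hε).trans hLε
      linarith [mul_pos (sub_pos.mpr (div_lt_iff₀' two_pos |>.mp hlo)) hL0]
  have hM : Tendsto (fun L => exp (ε * L) * (ε - 2 * lamMinus L)) atTop (𝓝 ε) := by
    refine tendsto_exp_mul_of_mul_exp_sub_mul_eq (σ := 1) hε ?_ ?_ <;>
      filter_upwards [hL] with L hLε <;> obtain ⟨⟨hlo, hhi⟩, h⟩ := hMinus L hLε
    · rwa [show (ε - 1 * (ε - 2 * lamMinus L)) * L = 2 * lamMinus L * L by ring]
    · rw [one_mul]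
      exact mul_le_one_of_mul_exp_mul_eq_add (a := 2 * lamMinus L) (by linarith) (by linarith)
        (by rwa [sub_add_cancel])
  have hSum := (hP.add hM).div_const 2
  rw [add_self_div_two] at hSum
  exact ⟨(hP.div_const 2).congr fun L => by ring, (hM.div_const 2).congr fun L => by ring,
    hSum.congr fun L => by ring⟩
end

section
/- Let 0 < k < 2. The function f(u) = k·u²·(k − 2√(1 − u²)), defined for u ∈ (0, 1), has exactly one critical point in (0, 1), namely u_th(k) = √((12 − k² − k·√(12 + k²))/18); moreover 0 < u_th(k) < 1. -/
open Set Real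

/-!
Writing `s = √(1 - u²)`, one finds `f'(u) = -2ku (3s² - ks - 1) / s`, so on `(0, 1)` the critical
points of `f` are the `u` whose `s` is a positive root of `3s² - ks - 1`. The product of the two
roots is `-1/3`, so only `s = (k + √(12 + k²))/6` qualifies; it lies in `(0, 1)` exactly when
`k < 2`, and then `u = √(1 - s²)` is the displayed `u_th(k)`.
-/

/-- The energy `E(J(u, v))` reached from the point of abscissa `u` on the unstable manifold. -/
noncomputable def jumpEnergy (k u : ℝ) : ℝ := k * u ^ 2 * (k - 2 * √(1 - u ^ 2))

lemma hasDerivAt_jumpEnergy (k : ℝ) {u : ℝ} (hu : u ^ 2 < 1) :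
    HasDerivAt (jumpEnergy k)
      (-2 * k * u * (3 * √(1 - u ^ 2) ^ 2 - k * √(1 - u ^ 2) - 1) / √(1 - u ^ 2)) u := by
  have h1u : 0 < 1 - u ^ 2 := by linarith
  have hs : √(1 - u ^ 2) ≠ 0 := (sqrt_pos.2 h1u).ne'
  have hsqrt : HasDerivAt (fun x => √(1 - x ^ 2)) (-u / √(1 - u ^ 2)) u := by
    convert ((hasDerivAt_pow 2 u).const_sub 1).sqrt h1u.ne' using 1
    field_simp
    ring
  refine (((hasDerivAt_pow 2 u).const_mul k).fun_mul
    ((hsqrt.const_mul 2).const_sub k)).congr_deriv ?_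
  field_simp
  linear_combination (2 * k * u) * sq_sqrt h1u.le

lemma three_mul_sq_sub_mul_sub_one_eq_zero_iff (k : ℝ) {s : ℝ} (hs : 0 < s) :
    3 * s ^ 2 - k * s - 1 = 0 ↔ s = (k + √(12 + k ^ 2)) / 6 := by
  have hr2 : √(12 + k ^ 2) ^ 2 = 12 + k ^ 2 := sq_sqrt (by positivity)
  have hdiscrim : discrim 3 (-k) (-1) = √(12 + k ^ 2) * √(12 + k ^ 2) := by
    rw [discrim, ← sq, hr2]
    ring
  have hk_lt : k < √(12 + k ^ 2) := lt_sqrt_of_sq_lt (by linarith)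
  constructor
  · intro h
    rcases (quadratic_eq_zero_iff three_ne_zero hdiscrim s).1 (by linear_combination h) with
      hplus | hminus
    · rw [hplus]
      ring
    · linarith
  · rintro rfl
    linear_combination (1 / 12) * hr2

lemma one_sub_sq_threshold_root (k : ℝ) :
    1 - ((k + √(12 + k ^ 2)) / 6) ^ 2 = (12 - k ^ 2 - k * √(12 + k ^ 2)) / 18 := by
  linear_combination (-1 / 36) * sq_sqrt (by positivity : (0 : ℝ) ≤ 12 + k ^ 2)

lemma threshold_root_mem_Ioo {k : ℝ} (hk : k < 2) : (k + √(12 + k ^ 2)) / 6 ∈ Ioo 0 1 := by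
  have hpos : -k < √(12 + k ^ 2) := lt_sqrt_of_sq_lt (by linarith)
  have hlt : √(12 + k ^ 2) < 6 - k := (sqrt_lt' (by linarith)).2 (by nlinarith)
  constructor <;> linarith

lemma sqrt_one_sub_sq_mem_Ioo {S : ℝ} (hS : S ∈ Ioo 0 1) : √(1 - S ^ 2) ∈ Ioo 0 1 := by
  obtain ⟨hS0, hS1⟩ := hS
  exact ⟨sqrt_pos.2 (by nlinarith), (sqrt_lt' one_pos).2 (by nlinarith)⟩

lemma sqrt_one_sub_sq_eq_iff {u S : ℝ} (hu : u ∈ Icc 0 1) (hS : S ∈ Icc 0 1) :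
    √(1 - u ^ 2) = S ↔ u = √(1 - S ^ 2) := by
  obtain ⟨hu0, hu1⟩ := hu
  obtain ⟨hS0, hS1⟩ := hS
  rw [sqrt_eq_iff_eq_sq (by nlinarith) hS0, eq_comm (a := u),
    sqrt_eq_iff_eq_sq (by nlinarith) hu0]
  constructor <;> intro h <;> linarith

lemma deriv_jumpEnergy_eq_zero_iff {k u : ℝ} (hk : k ≠ 0) (hu : u ∈ Ioo 0 1) :
    deriv (jumpEnergy k) u = 0 ↔ √(1 - u ^ 2) = (k + √(12 + k ^ 2)) / 6 := by
  obtain ⟨hu0, hu1⟩ := hu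
  have hs : 0 < √(1 - u ^ 2) := sqrt_pos.2 (by nlinarith)
  have hku : -2 * k * u ≠ 0 := mul_ne_zero (mul_ne_zero (by norm_num) hk) hu0.ne'
  rw [(hasDerivAt_jumpEnergy k (by nlinarith)).deriv, div_eq_zero_iff, or_iff_left hs.ne',
    mul_eq_zero, or_iff_right hku, three_mul_sq_sub_mul_sub_one_eq_zero_iff k hs]

/-- for `0 < k < 2`, the function
`f(u) = k u² (k - 2 √(1 - u²))` has exactly one critical point in `(0,1)`, namely
`u_th(k) = √((12 - k² - k √(12 + k²))/18)`, which lies in `(0,1)`. -/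
theorem threshold_unique_critical_point (k : ℝ) (hk0 : 0 < k) (hk2 : k < 2) :
    ∀ f : ℝ → ℝ, f = (fun u => k * u ^ 2 * (k - 2 * Real.sqrt (1 - u ^ 2))) →
    ∀ uth : ℝ, uth = Real.sqrt ((12 - k ^ 2 - k * Real.sqrt (12 + k ^ 2)) / 18) →
      uth ∈ Ioo (0 : ℝ) 1 ∧
      ∀ u ∈ Ioo (0 : ℝ) 1, (deriv f u = 0 ↔ u = uth) := by
  rintro f rfl uth rfl
  have hroot := threshold_root_mem_Ioo hk2
  rw [← one_sub_sq_threshold_root]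
  refine ⟨sqrt_one_sub_sq_mem_Ioo hroot, fun u hu => ?_⟩
  change deriv (jumpEnergy k) u = 0 ↔ _
  rw [deriv_jumpEnergy_eq_zero_iff hk0.ne' hu,
    sqrt_one_sub_sq_eq_iff (Ioo_subset_Icc_self hu) (Ioo_subset_Icc_self hroot)]
end
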